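/- Assume no regulatory arbitrage at level γ and Assumption (A) as above. Then Φ(X) := ρ(−X) is real valued on B_Z: for every Borel measurable X : Ω → ℝ^N with X/Z componentwise bounded, −∞ < Φ(X) < +∞. -/

import Mathlib

/-!
An `X` dominated by a multiple of `Z` can be made acceptable by adding enough cash: Assumption (A)
with `n ≥ M` covers every position bounded below by `-M Z`. Hence `ρ(-X) < ∞`. For the lower bound,
if `m` makes `-X` acceptable and `m'` makes `X` acceptable, then by convexity the cash vector
`(m + m') / 2` alone is acceptable, so no regulatory arbitrage forces `∑ m + ∑ m' ≥ 2γ`; thus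
`ρ(-X) ≥ 2γ - ∑ m' > -∞`.
-/

open scoped BigOperators

/-- The robust market-adjusted systemic risk measure
`ρ(X) = inf { ∑ᵢ mⁱ | m ∈ ℝ^N, ∃ g ∈ G, Λ∘(m+X+g) ∈ A }`, `inf ∅ = +∞`. -/
noncomputable def rho {Ω : Type*} {N : ℕ} (A : Set (Ω → ℝ)) (G : Set (Ω → Fin N → ℝ))
    (Λ : (Fin N → ℝ) → ℝ) (X : Ω → Fin N → ℝ) : EReal :=
  sInf ((fun m : Fin N → ℝ => ((∑ i, m i : ℝ) : EReal)) ''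
    {m | ∃ g ∈ G, (fun ω => Λ (fun i => m i + X ω i + g ω i)) ∈ A})

section RiskMeasure

variable {Ω : Type*} {N : ℕ} {A : Set (Ω → ℝ)} {G : Set (Ω → Fin N → ℝ)}
  {Λ : (Fin N → ℝ) → ℝ} {X : Ω → Fin N → ℝ}

theorem rho_le_sum {m : Fin N → ℝ} {g : Ω → Fin N → ℝ} (hg : g ∈ G)
    (hm : (fun ω => Λ (fun i => m i + X ω i + g ω i)) ∈ A) :
    rho A G Λ X ≤ ((∑ i, m i : ℝ) : EReal) :=
  sInf_le ⟨m, ⟨g, hg, hm⟩, rfl⟩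

theorem le_rho {c : ℝ}
    (h : ∀ m : Fin N → ℝ, ∀ g ∈ G, (fun ω => Λ (fun i => m i + X ω i + g ω i)) ∈ A →
      c ≤ ∑ i, m i) :
    (c : EReal) ≤ rho A G Λ X := by
  refine le_sInf ?_
  rintro _ ⟨m, ⟨g, hg, hm⟩, rfl⟩
  exact EReal.coe_le_coe (h m g hg hm)

theorem two_mul_le_sum_add_sum_of_convex
    (hCconv : Convex ℝ {X : Ω → Fin N → ℝ | ∃ g ∈ G, (fun ω => Λ (X ω + g ω)) ∈ A})
    {γ : ℝ} (hnoarb : ∀ m : Fin N → ℝ, (∑ i, m i) < γ →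
      ¬ ∃ g ∈ G, (fun ω => Λ (fun i => m i + g ω i)) ∈ A)
    {m m' : Fin N → ℝ} {g g' : Ω → Fin N → ℝ} (hg : g ∈ G) (hg' : g' ∈ G)
    (hm : (fun ω => Λ (fun i => m i + X ω i + g ω i)) ∈ A)
    (hm' : (fun ω => Λ (fun i => m' i + -X ω i + g' ω i)) ∈ A) :
    2 * γ ≤ ∑ i, m i + ∑ i, m' i := by
  by_contra! hlt
  obtain ⟨g'', hg'', hmid⟩ := hCconv (x := fun ω i => m i + X ω i)
    (y := fun ω i => m' i + -X ω i) ⟨g, hg, hm⟩ ⟨g', hg', hm'⟩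
    (a := 1 / 2) (b := 1 / 2) (by norm_num) (by norm_num) (by norm_num)
  have hmid_eq : ((1 / 2 : ℝ) • (fun ω i => m i + X ω i) + (1 / 2 : ℝ) • fun ω i => m' i + -X ω i)
      = fun _ i => (m i + m' i) / 2 := by
    funext ω i
    simp only [Pi.add_apply, Pi.smul_apply, smul_eq_mul]
    ring
  rw [hmid_eq] at hmid
  refine hnoarb (fun i => (m i + m' i) / 2) ?_ ⟨g'', hg'', hmid⟩
  rw [← Finset.sum_div, Finset.sum_add_distrib]
  linarith

theorem exists_const_acceptable {Z : Ω → ℝ} {γ : ℝ}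
    (hAmono : ∀ x y : Ω → ℝ, y ∈ A → (∀ ω, y ω ≤ x ω) → x ∈ A) (hΛmono : Monotone Λ)
    (hassA : ∀ n : ℕ, 0 < n → ∃ z : ℝ, 0 ≤ z ∧ ∃ g ∈ G,
      (fun ω => Λ (fun i => γ / N + 1 / n - n * max (Z ω - z) 0 + g ω i)) ∈ A)
    {M : ℝ} (hM : 0 ≤ M) (hX : ∀ ω i, -(M * Z ω) ≤ X ω i) :
    ∃ c : ℝ, ∃ g ∈ G, (fun ω => Λ (fun i => c + X ω i + g ω i)) ∈ A := by
  obtain ⟨z, -, g, hg, hA⟩ := hassA (⌈M⌉₊ + 1) (Nat.succ_pos _)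
  have hMn : M ≤ ((⌈M⌉₊ + 1 : ℕ) : ℝ) := (Nat.le_ceil M).trans (by push_cast; linarith)
  refine ⟨γ / N + 1 / (⌈M⌉₊ + 1 : ℕ) + M * z, g, hg, hAmono _ _ hA fun ω => hΛmono fun i => ?_⟩
  have hXωi := hX ω i
  rcases le_total (Z ω) z with h | h
  · rw [max_eq_right (by linarith)]
    nlinarith
  · rw [max_eq_left (by linarith)]
    nlinarith

end RiskMeasure

theorem exists_uniform_bound_mul {Ω ι : Type*} [Fintype ι] {Z : Ω → ℝ} (hZ : ∀ ω, 0 ≤ Z ω)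
    {X : Ω → ι → ℝ} (hX : ∀ i, ∃ M : ℝ, ∀ ω, |X ω i| ≤ M * Z ω) :
    ∃ M : ℝ, 0 ≤ M ∧ ∀ ω i, |X ω i| ≤ M * Z ω := by
  choose M hM using hX
  refine ⟨∑ j, |M j|, Finset.sum_nonneg fun j _ => abs_nonneg _, fun ω i => (hM i ω).trans ?_⟩
  gcongr
  · exact hZ ω
  · exact (le_abs_self _).trans
      (Finset.single_le_sum (fun j _ => abs_nonneg (M j)) (Finset.mem_univ i))

theorem stmt_15_general {Ω : Type*} [MeasurableSpace Ω] {N : ℕ}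
    (Z : Ω → ℝ) (hZ1 : ∀ ω, 1 ≤ Z ω)
    (A : Set (Ω → ℝ)) (G : Set (Ω → Fin N → ℝ))
    (hAmono : ∀ x y : Ω → ℝ, y ∈ A → (∀ ω, y ω ≤ x ω) → x ∈ A)
    (Λ : (Fin N → ℝ) → ℝ) (hΛmono : Monotone Λ)
    (hCconv : Convex ℝ {X : Ω → Fin N → ℝ | ∃ g ∈ G, (fun ω => Λ (X ω + g ω)) ∈ A})
    (γ : ℝ)
    (hnoarb : ∀ m : Fin N → ℝ, (∑ i, m i) < γ →
      ¬ ∃ g ∈ G, (fun ω => Λ (fun i => m i + g ω i)) ∈ A)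
    (hassA : ∀ n : ℕ, 0 < n → ∃ z : ℝ, 0 ≤ z ∧ ∃ g ∈ G,
      (fun ω => Λ (fun i => γ / N + 1 / n - n * max (Z ω - z) 0 + g ω i)) ∈ A)
    (BZ : Set (Ω → Fin N → ℝ))
    (hBZ : BZ = {X : Ω → Fin N → ℝ | Measurable X ∧ ∀ i, ∃ M : ℝ, ∀ ω, |X ω i| ≤ M * Z ω}) :
    ∀ X ∈ BZ, rho A G Λ (-X) ≠ ⊤ ∧ rho A G Λ (-X) ≠ ⊥ := by
  intro X hX
  rw [hBZ] at hX
  obtain ⟨M, hM, hMX⟩ := exists_uniform_bound_mul (fun ω => zero_le_one.trans (hZ1 ω)) hX.2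
  obtain ⟨c, g, hg, hc⟩ := exists_const_acceptable (X := -X) hAmono hΛmono hassA hM
    fun ω i => neg_le_of_abs_le (by simpa only [Pi.neg_apply, abs_neg] using hMX ω i)
  obtain ⟨c', g', hg', hc'⟩ := exists_const_acceptable hAmono hΛmono hassA hM
    fun ω i => neg_le_of_abs_le (hMX ω i)
  refine ⟨ne_top_of_le_ne_top (EReal.coe_ne_top _) (rho_le_sum hg hc),
    ne_bot_of_le_ne_bot (EReal.coe_ne_bot (2 * γ - N * c')) (le_rho fun m g'' hg'' hm => ?_)⟩
  have := two_mul_le_sum_add_sum_of_convex hCconv hnoarb (m := fun _ => c') hg' hg'' hc' hm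
  simp only [Finset.sum_const, Finset.card_univ, Fintype.card_fin, nsmul_eq_mul] at this
  linarith

/-- under no regulatory arbitrage at level γ and Assumption (A),
Φ(X) := ρ(−X) is real valued on B_Z. -/
theorem stmt_15 {Ω : Type*} [MeasurableSpace Ω] [MetricSpace Ω] [BorelSpace Ω]
    [Nonempty Ω] {N : ℕ} (hN : 0 < N)
    (Z : Ω → ℝ) (hZc : Continuous Z) (hZ1 : ∀ ω, 1 ≤ Z ω)
    (hZcomp : ∀ z : ℝ, IsCompact {ω | Z ω ≤ z})
    (A : Set (Ω → ℝ)) (G : Set (Ω → Fin N → ℝ))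
    (hAmono : ∀ x y : Ω → ℝ, y ∈ A → (∀ ω, y ω ≤ x ω) → x ∈ A)
    (h0A : (0 : Ω → ℝ) ∈ A) (h0G : (0 : Ω → Fin N → ℝ) ∈ G)
    (Λ : (Fin N → ℝ) → ℝ) (hΛmono : Monotone Λ)
    (hΛconc : ConcaveOn ℝ Set.univ Λ) (hΛ0 : Λ 0 = 0)
    (hCconv : Convex ℝ {X : Ω → Fin N → ℝ | ∃ g ∈ G, (fun ω => Λ (X ω + g ω)) ∈ A})
    (γ : ℝ) (hγ : γ ≤ 0)
    (hnoarb : ∀ m : Fin N → ℝ, (∑ i, m i) < γ →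
      ¬ ∃ g ∈ G, (fun ω => Λ (fun i => m i + g ω i)) ∈ A)
    (hassA : ∀ n : ℕ, 0 < n → ∃ z : ℝ, 0 ≤ z ∧ ∃ g ∈ G,
      (fun ω => Λ (fun i => γ / N + 1 / n - n * max (Z ω - z) 0 + g ω i)) ∈ A)
    (BZ : Set (Ω → Fin N → ℝ))
    (hBZ : BZ = {X : Ω → Fin N → ℝ | Measurable X ∧ ∀ i, ∃ M : ℝ, ∀ ω, |X ω i| ≤ M * Z ω}) :
    ∀ X ∈ BZ, rho A G Λ (-X) ≠ ⊤ ∧ rho A G Λ (-X) ≠ ⊥ :=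
  stmt_15_general Z hZ1 A G hAmono Λ hΛmono hCconv γ hnoarb hassA BZ hBZ
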